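/- Let Σ ∈ ℝ^{m×n} be rectangular diagonal with diagonal entries σ₁ ≥ … ≥ σ_k > 0 and σ_j = 0 for all j > k (so rank(Σ) = k), let Ṽ ∈ ℝ^{n×n} be orthogonal, let μ be a probability measure on ℝ^n with ∫‖x‖² dμ(x) < ∞, set r = min(m,n), and let p₁,…,p_r > 0 with ∑_b p_b = 1. If (U,V) ∈ ℝ^{m×r} × ℝ^{n×r} is a global minimizer of G(U,V) = ∫ ∑_{b=1}^r p_b ‖(U_{:b}V_{:b}ᵀ − Σ) Ṽᵀ x‖² dμ(x), then for every b ∈ {1,…,r} and every coordinate index j with k < j ≤ m, the j-th coordinate of U_{:b}V_{:b}ᵀ Ṽᵀ x is zero for μ-almost every x. Consequently, replacing rows k+1,…,m of U by zero does not change the value of G and again yields a global minimizer. -/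

import Mathlib

/-! The rows of `Σ` with index `≥ k` vanish, so for each `b` the squared residual of `U`
splits into the residual of `U` with those rows zeroed plus the squared norm of the same rows
of `U_{:b}V_{:b}ᵀṼᵀx`. Zeroing these rows can therefore only decrease `G`; at a minimizer both
integrands have the same integral, so they agree almost everywhere and the nonnegative extra
term vanishes almost everywhere. -/

open Matrix MeasureTheory

noncomputable section

/-- Squared Euclidean norm of a vector in `ℝ^m`. -/
def sqNorm {m : ℕ} (v : Fin m → ℝ) : ℝ := ∑ i, v i ^ 2

/-- `lrProd b U V = U_{:b} V_{:b}ᵀ`, the product of the submatrices consisting of the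
first `b` columns of `U` and of `V`. -/
def lrProd {m n r : ℕ} (b : ℕ) (U : Matrix (Fin m) (Fin r) ℝ)
    (V : Matrix (Fin n) (Fin r) ℝ) : Matrix (Fin m) (Fin n) ℝ :=
  Matrix.of fun i j => ∑ t : Fin r, if (t : ℕ) < b then U i t * V j t else 0

/-- `G(U,V) = ∫ ∑_{b=1}^r p_b ‖(U_{:b}V_{:b}ᵀ − Σ) Ṽᵀ x‖² dμ(x)`.
(The index `b : Fin r` stands for the 1-indexed truncation level `b+1 ∈ {1,…,r}`.) -/
def transObj {m n r : ℕ} (S : Matrix (Fin m) (Fin n) ℝ)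
    (Vt : Matrix (Fin n) (Fin n) ℝ) (μ : Measure (Fin n → ℝ)) (p : Fin r → ℝ)
    (U : Matrix (Fin m) (Fin r) ℝ) (V : Matrix (Fin n) (Fin r) ℝ) : ℝ :=
  ∫ x, ∑ b : Fin r,
    p b * sqNorm ((lrProd ((b : ℕ) + 1) U V - S).mulVec (Vtᵀ.mulVec x)) ∂μ

lemma sqNorm_nonneg {m : ℕ} (v : Fin m → ℝ) : 0 ≤ sqNorm v :=
  Finset.sum_nonneg fun _ _ => sq_nonneg _

lemma sqNorm_mulVec_le {m n : ℕ} (A : Matrix (Fin m) (Fin n) ℝ) (x : Fin n → ℝ) :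
    sqNorm (A *ᵥ x) ≤ (∑ i, ∑ j, A i j ^ 2) * sqNorm x := by
  rw [sqNorm, Finset.sum_mul]
  exact Finset.sum_le_sum fun i _ => Finset.sum_mul_sq_le_sq_mul_sq Finset.univ (A i) x

lemma integrable_sum_mul_sqNorm_mulVec {m n r : ℕ} {μ : Measure (Fin n → ℝ)}
    (hmoment : Integrable (fun x => ∑ i, x i ^ 2) μ)
    (N : Fin r → Matrix (Fin m) (Fin n) ℝ) {p : Fin r → ℝ} (hp : ∀ b, 0 ≤ p b) :
    Integrable (fun x => ∑ b, p b * sqNorm (N b *ᵥ x)) μ := by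
  refine (hmoment.const_mul (∑ b, p b * ∑ i, ∑ j, N b i j ^ 2)).mono' ?_
    (Filter.Eventually.of_forall fun x => ?_)
  · apply Continuous.aestronglyMeasurable
    simp only [sqNorm, mulVec, dotProduct]
    fun_prop
  · rw [Real.norm_of_nonneg (Finset.sum_nonneg fun b _ => mul_nonneg (hp b) (sqNorm_nonneg _)),
      Finset.sum_mul]
    refine Finset.sum_le_sum fun b _ => ?_
    rw [mul_assoc]
    exact mul_le_mul_of_nonneg_left (sqNorm_mulVec_le _ _) (hp b)

section RowTruncation

variable {m ι : Type*} (P : m → Prop) [DecidablePred P]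

def zeroRows (A : Matrix m ι ℝ) : Matrix m ι ℝ :=
  Matrix.of fun i t => if P i then 0 else A i t

lemma zeroRows_sub (A B : Matrix m ι ℝ) :
    zeroRows P (A - B) = zeroRows P A - zeroRows P B := by
  ext i t
  by_cases h : P i <;> simp [zeroRows, h]

lemma zeroRows_eq_self {A : Matrix m ι ℝ} (hA : ∀ i, P i → A i = 0) : zeroRows P A = A := by
  ext i t
  by_cases h : P i <;> simp [zeroRows, h, hA]

lemma zeroRows_mulVec [Fintype ι] (A : Matrix m ι ℝ) (v : ι → ℝ) (i : m) :
    (zeroRows P A *ᵥ v) i = if P i then 0 else (A *ᵥ v) i := by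
  by_cases h : P i <;> simp [zeroRows, mulVec, dotProduct, h]

end RowTruncation

lemma lrProd_zeroRows {m n r : ℕ} (P : Fin m → Prop) [DecidablePred P] (c : ℕ)
    (U : Matrix (Fin m) (Fin r) ℝ) (V : Matrix (Fin n) (Fin r) ℝ) :
    lrProd c (zeroRows P U) V = zeroRows P (lrProd c U V) := by
  ext i j
  by_cases h : P i <;> simp [lrProd, zeroRows, h]

lemma sqNorm_eq_sqNorm_zeroRows_add {m n : ℕ} (P : Fin m → Prop) [DecidablePred P]
    (A S : Matrix (Fin m) (Fin n) ℝ) (hS : ∀ i, P i → S i = 0) (v : Fin n → ℝ) :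
    sqNorm ((A - S) *ᵥ v) =
      sqNorm ((zeroRows P A - S) *ᵥ v) + ∑ i, if P i then (A *ᵥ v) i ^ 2 else 0 := by
  rw [← zeroRows_eq_self P hS, ← zeroRows_sub, zeroRows_eq_self P hS, sqNorm, sqNorm,
    ← Finset.sum_add_distrib]
  refine Finset.sum_congr rfl fun i _ => ?_
  by_cases h : P i
  · have hSv : (S *ᵥ v) i = 0 := by simp [mulVec, hS i h]
    simp [h, sub_mulVec, zeroRows_mulVec, hSv]
  · simp [h, zeroRows_mulVec]

section TransformedLoss

variable {m n r : ℕ} (S : Matrix (Fin m) (Fin n) ℝ) (Vt : Matrix (Fin n) (Fin n) ℝ)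
  (p : Fin r → ℝ)

def transLoss (U : Matrix (Fin m) (Fin r) ℝ) (V : Matrix (Fin n) (Fin r) ℝ)
    (x : Fin n → ℝ) : ℝ :=
  ∑ b : Fin r, p b * sqNorm ((lrProd ((b : ℕ) + 1) U V - S) *ᵥ (Vtᵀ *ᵥ x))

lemma integrable_transLoss {μ : Measure (Fin n → ℝ)}
    (hmoment : Integrable (fun x => ∑ i, x i ^ 2) μ) (hp : ∀ b, 0 ≤ p b)
    (U : Matrix (Fin m) (Fin r) ℝ) (V : Matrix (Fin n) (Fin r) ℝ) :
    Integrable (transLoss S Vt p U V) μ := by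
  convert integrable_sum_mul_sqNorm_mulVec hmoment
    (fun b : Fin r => (lrProd ((b : ℕ) + 1) U V - S) * Vtᵀ) hp using 1
  ext x
  simp [transLoss, mulVec_mulVec]

lemma transLoss_eq_zeroRows_add (P : Fin m → Prop) [DecidablePred P]
    (hS : ∀ i, P i → S i = 0) (U : Matrix (Fin m) (Fin r) ℝ) (V : Matrix (Fin n) (Fin r) ℝ)
    (x : Fin n → ℝ) :
    transLoss S Vt p U V x = transLoss S Vt p (zeroRows P U) V x +
      ∑ b : Fin r, p b *
        ∑ i, if P i then (lrProd ((b : ℕ) + 1) U V *ᵥ (Vtᵀ *ᵥ x)) i ^ 2 else 0 := by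
  simp only [transLoss, ← Finset.sum_add_distrib, ← mul_add, lrProd_zeroRows,
    ← sqNorm_eq_sqNorm_zeroRows_add P _ S hS]

lemma transLoss_zeroRows_ae_eq {μ : Measure (Fin n → ℝ)}
    (hmoment : Integrable (fun x => ∑ i, x i ^ 2) μ) (hp : ∀ b, 0 ≤ p b)
    (P : Fin m → Prop) [DecidablePred P] (hS : ∀ i, P i → S i = 0)
    {U : Matrix (Fin m) (Fin r) ℝ} {V : Matrix (Fin n) (Fin r) ℝ}
    (hmin : transObj S Vt μ p U V ≤ transObj S Vt μ p (zeroRows P U) V) :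
    transLoss S Vt p (zeroRows P U) V =ᵐ[μ] transLoss S Vt p U V := by
  have hle : transLoss S Vt p (zeroRows P U) V ≤ transLoss S Vt p U V := fun x => by
    rw [transLoss_eq_zeroRows_add S Vt p P hS U V x]
    refine le_add_of_nonneg_right (Finset.sum_nonneg fun b _ => mul_nonneg (hp b) ?_)
    exact Finset.sum_nonneg fun i _ => by split_ifs <;> positivity
  have hint := integrable_transLoss S Vt p hmoment hp
  exact (integral_eq_iff_of_ae_le (hint _ V) (hint U V) (.of_forall hle)).mp
    (le_antisymm (integral_mono (hint _ V) (hint U V) hle) hmin)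

end TransformedLoss

lemma eq_zero_of_sum_mul_sum_ite_sq_eq_zero {ι κ : Type*} [Fintype ι] [Fintype κ]
    {p : κ → ℝ} (hp : ∀ b, 0 < p b) (P : ι → Prop) [DecidablePred P] {y : κ → ι → ℝ}
    (hy : ∑ b, p b * ∑ i, (if P i then y b i ^ 2 else 0) = 0) (b : κ) {i : ι}
    (hi : P i) :
    y b i = 0 := by
  have hterm_nonneg : ∀ b' i', 0 ≤ if P i' then y b' i' ^ 2 else 0 := fun _ _ => by
    split_ifs <;> positivity
  have hb := (Finset.sum_eq_zero_iff_of_nonneg fun b' _ =>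
    mul_nonneg (hp b').le (Finset.sum_nonneg fun i' _ => hterm_nonneg b' i')).mp hy b
    (Finset.mem_univ _)
  have hbi := (Finset.sum_eq_zero_iff_of_nonneg fun i' _ => hterm_nonneg b i').mp
    ((mul_eq_zero.mp hb).resolve_left (hp b).ne') i (Finset.mem_univ _)
  rw [if_pos hi] at hbi
  exact pow_eq_zero_iff two_ne_zero |>.mp hbi

theorem stmt12_general {m n k : ℕ}
    (S : Matrix (Fin m) (Fin n) ℝ)
    (hSdiag : ∀ (i : Fin m) (j : Fin n), (i : ℕ) ≠ (j : ℕ) → S i j = 0)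
    (hSzero : ∀ (i : Fin m) (j : Fin n), (i : ℕ) = (j : ℕ) → k ≤ (i : ℕ) → S i j = 0)
    (Vt : Matrix (Fin n) (Fin n) ℝ)
    (μ : Measure (Fin n → ℝ))
    (hmoment : Integrable (fun x => ∑ i, x i ^ 2) μ)
    (p : Fin (min m n) → ℝ) (hp : ∀ b, 0 < p b)
    (U : Matrix (Fin m) (Fin (min m n)) ℝ) (V : Matrix (Fin n) (Fin (min m n)) ℝ)
    (hmin : ∀ (U' : Matrix (Fin m) (Fin (min m n)) ℝ)
      (V' : Matrix (Fin n) (Fin (min m n)) ℝ),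
      transObj S Vt μ p U V ≤ transObj S Vt μ p U' V') :
    (∀ b : Fin (min m n), ∀ j : Fin m, k ≤ (j : ℕ) →
      ∀ᵐ x ∂μ, (lrProd ((b : ℕ) + 1) U V).mulVec (Vtᵀ.mulVec x) j = 0) ∧
    (transObj S Vt μ p
        (Matrix.of fun i t => if k ≤ (i : ℕ) then 0 else U i t) V =
      transObj S Vt μ p U V ∧
      ∀ (U' : Matrix (Fin m) (Fin (min m n)) ℝ)
        (V' : Matrix (Fin n) (Fin (min m n)) ℝ),
        transObj S Vt μ p (Matrix.of fun i t => if k ≤ (i : ℕ) then 0 else U i t) V ≤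
          transObj S Vt μ p U' V') := by
  set P : Fin m → Prop := fun i => k ≤ (i : ℕ)
  have hS : ∀ i, P i → S i = 0 := fun i hi => funext fun j => by
    rcases eq_or_ne (i : ℕ) j with h | h
    exacts [hSzero i j h hi, hSdiag i j h]
  have hae := transLoss_zeroRows_ae_eq S Vt p hmoment (fun b => (hp b).le) P hS (hmin _ V)
  have hvalue : transObj S Vt μ p (zeroRows P U) V = transObj S Vt μ p U V :=
    integral_congr_ae hae
  refine ⟨fun b j hj => ?_, hvalue, fun U' V' => hvalue ▸ hmin U' V'⟩
  filter_upwards [hae] with x hx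
  rw [transLoss_eq_zeroRows_add S Vt p P hS U V x, left_eq_add] at hx
  exact eq_zero_of_sum_mul_sum_ite_sq_eq_zero hp P hx b hj

/-- Let `Σ ∈ ℝ^{m×n}` be rectangular diagonal of rank `k` (diagonal
entries `σ₁ ≥ … ≥ σ_k > 0` and `σ_j = 0` for `j > k`), `Ṽ ∈ ℝ^{n×n}` orthogonal, `μ` a
probability measure with finite second moment, `r = min m n`, and `p_b > 0` with
`∑ p_b = 1`. If `(U,V)` globally minimizes
`G(U,V) = ∫ ∑_b p_b ‖(U_{:b}V_{:b}ᵀ − Σ)Ṽᵀ x‖² dμ`, then for every `b ∈ {1,…,r}` and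
every coordinate `j` with `k < j ≤ m` (0-indexed: `k ≤ j`), the `j`-th coordinate of
`U_{:b}V_{:b}ᵀ Ṽᵀ x` vanishes for `μ`-a.e. `x`; consequently, zeroing out rows
`k+1,…,m` of `U` leaves the value of `G` unchanged and again yields a global
minimizer. -/
theorem stmt12 {m n k : ℕ} (hk : k ≤ min m n)
    (S : Matrix (Fin m) (Fin n) ℝ)
    (hSdiag : ∀ (i : Fin m) (j : Fin n), (i : ℕ) ≠ (j : ℕ) → S i j = 0)
    (hSpos : ∀ (i : Fin m) (j : Fin n), (i : ℕ) = (j : ℕ) → (i : ℕ) < k → 0 < S i j)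
    (hSzero : ∀ (i : Fin m) (j : Fin n), (i : ℕ) = (j : ℕ) → k ≤ (i : ℕ) → S i j = 0)
    (hSmono : ∀ (i i' : Fin m) (j j' : Fin n), (i : ℕ) = (j : ℕ) → (i' : ℕ) = (j' : ℕ) →
      (i : ℕ) ≤ (i' : ℕ) → S i' j' ≤ S i j)
    (Vt : Matrix (Fin n) (Fin n) ℝ)
    (hVorth : Vtᵀ * Vt = 1) (hVorth' : Vt * Vtᵀ = 1)
    (μ : Measure (Fin n → ℝ)) [IsProbabilityMeasure μ]
    (hmoment : Integrable (fun x => ∑ i, x i ^ 2) μ)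
    (p : Fin (min m n) → ℝ) (hp : ∀ b, 0 < p b) (hpsum : ∑ b, p b = 1)
    (U : Matrix (Fin m) (Fin (min m n)) ℝ) (V : Matrix (Fin n) (Fin (min m n)) ℝ)
    (hmin : ∀ (U' : Matrix (Fin m) (Fin (min m n)) ℝ)
      (V' : Matrix (Fin n) (Fin (min m n)) ℝ),
      transObj S Vt μ p U V ≤ transObj S Vt μ p U' V') :
    (∀ b : Fin (min m n), ∀ j : Fin m, k ≤ (j : ℕ) →
      ∀ᵐ x ∂μ, (lrProd ((b : ℕ) + 1) U V).mulVec (Vtᵀ.mulVec x) j = 0) ∧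
    (transObj S Vt μ p
        (Matrix.of fun i t => if k ≤ (i : ℕ) then 0 else U i t) V =
      transObj S Vt μ p U V ∧
      ∀ (U' : Matrix (Fin m) (Fin (min m n)) ℝ)
        (V' : Matrix (Fin n) (Fin (min m n)) ℝ),
        transObj S Vt μ p (Matrix.of fun i t => if k ≤ (i : ℕ) then 0 else U i t) V ≤
          transObj S Vt μ p U' V') :=
  stmt12_general S hSdiag hSzero Vt μ hmoment p hp U V hmin

end
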